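/- There is a power d of the imaginary unit i such that the sesquilinear form ⟨u,v⟩_Δ := d·(e_{i₁}·…·e_{i_p}·u, v) on Δ^ℂ_{p,q} — where (·,·) is the standard Hermitian inner product on ℂ^{2^⌊n/2⌋} and i₁ < … < i_p are the indices with ε_{i_j} = −1 — is Hermitian, has neutral signature when p > 0 and q > 0, and satisfies ⟨X·u, v⟩_Δ + (−1)^p ⟨u, X·v⟩_Δ = 0 for all X ∈ ℝⁿ and all u, v ∈ Δ^ℂ_{p,q}. -/

import Mathlib

open Complex Matrix

namespace Paper

noncomputable section

/-- The 2×2 generator matrices of Remark 2.1. -/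
def matE : Matrix (Fin 2) (Fin 2) ℂ := 1
def matT : Matrix (Fin 2) (Fin 2) ℂ := !![-1, 0; 0, 1]
def matG1 : Matrix (Fin 2) (Fin 2) ℂ := !![0, Complex.I; Complex.I, 0]
def matG2 : Matrix (Fin 2) (Fin 2) ℂ := !![0, -1; 1, 0]

/-- Iterated Kronecker product of 2×2 matrices, realised on the index type `Fin m → Fin 2`
(the slot `ν` corresponds to the `(ν+1)`-st label of the basis spinors `u(ε₁,…,ε_m)`,
i.e. the Kronecker factors are taken from right to left). -/
def tprod {m : ℕ} (M : Fin m → Matrix (Fin 2) (Fin 2) ℂ) :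
    Matrix (Fin m → Fin 2) (Fin m → Fin 2) ℂ :=
  Matrix.of fun a b => ∏ ν, M ν (a ν) (b ν)

/-- `τ_j = 1` if `ε_j = 1` and `τ_j = i` if `ε_j = -1`. -/
def tau {n : ℕ} (ε : Fin n → ℝ) (j : Fin n) : ℂ := if ε j = 1 then 1 else Complex.I

/-- The matrices `Φ_{p,q}(e_i)` of the explicit Clifford representation of Remark 2.1
(0-based index `i`; the paper's `e_{2j-1}` resp. `e_{2j}` correspond to `i = 2j-2` resp.
`i = 2j-1`, acting by `g₁` resp. `g₂` in slot `j-1`, by `T` in the lower slots and by `E`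
in the higher slots).  For odd `n` the last matrix is the first component
`pr₁ ∘ Φ̃ (e_n) = τ_n · (i T ⊗ ⋯ ⊗ T)`. -/
def Phi {n : ℕ} (ε : Fin n → ℝ) (i : Fin n) :
    Matrix (Fin (n / 2) → Fin 2) (Fin (n / 2) → Fin 2) ℂ :=
  tau ε i •
    if i.val < 2 * (n / 2) then
      tprod fun ν : Fin (n / 2) =>
        if ν.val < i.val / 2 then matT
        else if ν.val = i.val / 2 then (if i.val % 2 = 0 then matG1 else matG2)
        else matE
    else Complex.I • tprod fun _ : Fin (n / 2) => matT

/-- The spinor module `Δ_{p,q} = ℂ^{2^{⌊n/2⌋}}`. -/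
abbrev Spinor (n : ℕ) := (Fin (n / 2) → Fin 2) → ℂ

/-- Clifford multiplication by a real vector, as a matrix. -/
def cliffR {n : ℕ} (ε : Fin n → ℝ) (x : Fin n → ℝ) :
    Matrix (Fin (n / 2) → Fin 2) (Fin (n / 2) → Fin 2) ℂ :=
  ∑ i, (x i : ℂ) • Phi ε i

/-- Clifford multiplication by a complex vector (complex-bilinear extension). -/
def cliffC {n : ℕ} (ε : Fin n → ℝ) (x : Fin n → ℂ) :
    Matrix (Fin (n / 2) → Fin 2) (Fin (n / 2) → Fin 2) ℂ :=
  ∑ i, x i • Phi ε i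

/-- The scalar product `⟨x,y⟩_{p,q} = ∑ ε_i x_i y_i` on `ℝⁿ`. -/
def ipR {n : ℕ} (ε : Fin n → ℝ) (x y : Fin n → ℝ) : ℝ := ∑ i, ε i * x i * y i

/-- Its complex-bilinear extension to `ℂⁿ`. -/
def ipC {n : ℕ} (ε : Fin n → ℝ) (x y : Fin n → ℂ) : ℂ := ∑ i, (ε i : ℂ) * x i * y i

/-- The standard Hermitian scalar product on the spinor module. -/
def stdInner {n : ℕ} (u v : Spinor n) : ℂ := ∑ b, (starRingEnd ℂ) (u b) * v b

/-- Clifford multiplication by the product `e_{i₁} ⋯ e_{i_k}` over a set of indices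
`s = {i₁ < … < i_k}`, taken in increasing order. -/
def cliffSet {n : ℕ} (ε : Fin n → ℝ) (s : Finset (Fin n)) :
    Matrix (Fin (n / 2) → Fin 2) (Fin (n / 2) → Fin 2) ℂ :=
  ((s.sort (· ≤ ·)).map (Phi ε)).prod

/-- The set of indices with `ε_i = -1`. -/
def negSet {n : ℕ} (ε : Fin n → ℝ) : Finset (Fin n) := Finset.univ.filter fun i => ε i = -1

/-- The indefinite spinor inner product `⟨u,v⟩_Δ = d · (e_{i₁} ⋯ e_{i_p} · u, v)`,
where `i₁ < … < i_p` are the indices with `ε = -1`. -/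
def sform {n : ℕ} (ε : Fin n → ℝ) (d : ℂ) (u v : Spinor n) : ℂ :=
  d * stdInner ((cliffSet ε (negSet ε)).mulVec u) v

/-- The coefficient `d_{k,p} · ε_{i₁} ⋯ ε_{i_k} · ⟨e_{i₁} ⋯ e_{i_k} · χ, χ⟩_Δ` of the
algebraic Dirac form (`dD` is the constant of the spinor inner product, `dk` is `d_{k,p}`). -/
def dCoeff {n : ℕ} (ε : Fin n → ℝ) (dD dk : ℂ) (s : Finset (Fin n)) (χ : Spinor n) : ℂ :=
  dk * (∏ i ∈ s, (ε i : ℂ)) * sform ε dD ((cliffSet ε s).mulVec χ) χ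

/-- The covector `X^♭ = ⟨X,·⟩_{p,q}`. -/
def flat {n : ℕ} (ε : Fin n → ℝ) (X : Fin n → ℝ) : (Fin n → ℝ) →ₗ[ℝ] ℝ :=
  ∑ i, (ε i * X i) • LinearMap.proj i

/-- The wedge product of `k` one-forms, as an alternating `k`-form. -/
def wedge1 {n k : ℕ} (f : Fin k → ((Fin n → ℝ) →ₗ[ℝ] ℝ)) :
    AlternatingMap ℝ (Fin n → ℝ) ℝ (Fin k) :=
  (Matrix.detRowAlternating : AlternatingMap ℝ (Fin k → ℝ) ℝ (Fin k)).compLinearMap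
    (LinearMap.pi f)

/-- The algebraic Dirac `k`-form
`α^k_χ = d_{k,p} ∑_{i₁<⋯<i_k} ε_{i₁}⋯ε_{i_k} ⟨e_{i₁}⋯e_{i_k}·χ, χ⟩_Δ e^♭_{i₁} ∧ ⋯ ∧ e^♭_{i_k}`
(a real form; the coefficients are real by the choice of the constant `dk = d_{k,p}`). -/
def diracForm {n : ℕ} (ε : Fin n → ℝ) (dD dk : ℂ) (k : ℕ) (χ : Spinor n) :
    AlternatingMap ℝ (Fin n → ℝ) ℝ (Fin k) :=
  ∑ s : Finset (Fin n),
    if h : s.card = k then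
      (dCoeff ε dD dk s χ).re •
        wedge1 fun j => flat ε (Pi.single (s.orderEmbOfFin h j) 1)
    else 0

/-- The wedge product of `j` one-forms with a `(p-j)`-form, as an alternating `p`-form. -/
def wedgeMix {n p j : ℕ} (h : j ≤ p) (f : Fin j → ((Fin n → ℝ) →ₗ[ℝ] ℝ))
    (β : AlternatingMap ℝ (Fin n → ℝ) ℝ (Fin (p - j))) :
    AlternatingMap ℝ (Fin n → ℝ) ℝ (Fin p) :=
  AlternatingMap.domDomCongr (finSumFinEquiv.trans (finCongr (by omega)))
    ((TensorProduct.lid ℝ ℝ).toLinearMap.compAlternatingMap ((wedge1 f).domCoprod β))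

/-- The basis spinor `u(ε₁,…,ε_m)` (encoded by `a : Fin m → Fin 2`, where `a ν = 0`
corresponds to the label `ε_{ν+1} = 1` and `a ν = 1` to `ε_{ν+1} = -1`). -/
def uB (n : ℕ) (a : Fin (n / 2) → Fin 2) : Spinor n := fun b => if b = a then 1 else 0

end

end Paper

/-!
The generators `Φ(e_i)` anticommute pairwise, square to `-ε_i`, and are anti-Hermitian or
Hermitian according as `ε_i = 1` or `ε_i = -1`; this is checked factor by factor on their
Kronecker decompositions. Hence the product `M` of the `Φ(e_i)` with `ε_i = -1` satisfies
`Mᴴ = (-1)^k M`, `M² = (-1)^k` with `k = p(p-1)/2`, and `M Φ(e_i) = ±(-1)^p Φ(e_i) M`. So the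
Gram matrix `B = (-i)^k M` of `⟨·,·⟩_Δ` is a Hermitian involution for which the invariance
relation holds generator by generator. The `±1`-eigenspaces of `B` are positive resp. negative
definite, and a generator anticommuting with `B` (one with `ε_i = -1` if `p` is even, one with
`ε_i = 1` if `p` is odd) swaps them, so both have half the dimension.
-/

namespace Paper

open Finset

section Involution

variable {K V : Type*} [Field K] [AddCommGroup V] [Module K V] {f g : Module.End K V}

lemma mem_ker_sub_one {x : V} : x ∈ LinearMap.ker (f - 1) ↔ f x = x := by
  simp [sub_eq_zero]

lemma mem_ker_add_one {x : V} : x ∈ LinearMap.ker (f + 1) ↔ f x = -x := by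
  simp [add_eq_zero_iff_eq_neg]

lemma isCompl_ker_sub_one_ker_add_one [NeZero (2 : K)] (hf : f * f = 1) :
    IsCompl (LinearMap.ker (f - 1)) (LinearMap.ker (f + 1)) := by
  have hff : ∀ x, f (f x) = x := fun x => by rw [← Module.End.mul_apply, hf, Module.End.one_apply]
  constructor
  · refine Submodule.disjoint_def.mpr fun x h₁ h₂ => ?_
    have h2x : (2 : K) • x = 0 := by
      rw [two_smul, ← neg_add_cancel x, ← mem_ker_add_one.mp h₂, mem_ker_sub_one.mp h₁]
    exact (smul_eq_zero.mp h2x).resolve_left two_ne_zero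
  · refine codisjoint_iff.mpr (Submodule.eq_top_iff'.mpr fun x => Submodule.mem_sup.mpr
      ⟨(2⁻¹ : K) • (x + f x), ?_, (2⁻¹ : K) • (x - f x), ?_, ?_⟩)
    · simp [hff, add_comm]
    · simp [hff]
    · rw [← smul_add, add_add_sub_cancel, ← two_smul K, smul_smul, inv_mul_cancel₀ two_ne_zero,
        one_smul]

lemma finrank_ker_sub_one_eq_finrank_ker_add_one [FiniteDimensional K V]
    (hg : Function.Injective g) (hfg : f * g = -(g * f)) :
    Module.finrank K (LinearMap.ker (f - 1)) = Module.finrank K (LinearMap.ker (f + 1)) := by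
  have hfgx : ∀ x, f (g x) = -g (f x) := fun x => LinearMap.congr_fun hfg x
  have hle : ∀ {p q : Submodule K V}, (∀ x ∈ p, g x ∈ q) →
      Module.finrank K p ≤ Module.finrank K q := fun h =>
    (Submodule.equivMapOfInjective g hg _).finrank_eq.trans_le
      (Submodule.finrank_mono (Submodule.map_le_iff_le_comap.mpr h))
  refine le_antisymm (hle fun x hx => ?_) (hle fun x hx => ?_)
  · rw [mem_ker_add_one, hfgx, mem_ker_sub_one.mp hx]
  · rw [mem_ker_sub_one, hfgx, mem_ker_add_one.mp hx, map_neg, neg_neg]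

end Involution

section HermitianForm

variable {ι : Type*} [Fintype ι]

lemma star_dotProduct_mulVec_swap {B : Matrix ι ι ℂ} (hB : Bᴴ = B) (u v : ι → ℂ) :
    star v ⬝ᵥ B *ᵥ u = star (star u ⬝ᵥ B *ᵥ v) := by
  rw [star_dotProduct, star_mulVec, ← dotProduct_mulVec, hB]

lemma star_mulVec_dotProduct_add (B C : Matrix ι ι ℂ) (c : ℂ) (u v : ι → ℂ) :
    star (C *ᵥ u) ⬝ᵥ B *ᵥ v + c * (star u ⬝ᵥ B *ᵥ (C *ᵥ v)) =
      star u ⬝ᵥ (Cᴴ * B + c • (B * C)) *ᵥ v := by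
  rw [star_mulVec, ← dotProduct_mulVec, add_mulVec, dotProduct_add, mulVec_mulVec, smul_mulVec,
    dotProduct_smul, mulVec_mulVec, smul_eq_mul]

variable [DecidableEq ι]

open scoped ComplexOrder in
lemma exists_neutral_isCompl_of_involution_anticomm {B U : Matrix ι ι ℂ} (hB : B * B = 1)
    (hU : IsUnit U) (hBU : B * U = -(U * B)) :
    ∃ V W : Submodule ℂ (ι → ℂ), IsCompl V W ∧
      2 * Module.finrank ℂ V = Fintype.card ι ∧ 2 * Module.finrank ℂ W = Fintype.card ι ∧
      (∀ v ∈ V, v ≠ 0 → 0 < (star v ⬝ᵥ B *ᵥ v).re) ∧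
      (∀ w ∈ W, w ≠ 0 → (star w ⬝ᵥ B *ᵥ w).re < 0) := by
  have hcompl := isCompl_ker_sub_one_ker_add_one (f := toLin' B)
    (by rw [Module.End.mul_eq_comp, ← toLin'_mul, hB, toLin'_one, Module.End.one_eq_id])
  have hrank := finrank_ker_sub_one_eq_finrank_ker_add_one (f := toLin' B) (g := toLin' U)
    (mulVec_injective_iff_isUnit.mpr hU)
    (by rw [Module.End.mul_eq_comp, Module.End.mul_eq_comp, ← toLin'_mul, ← toLin'_mul, hBU,
      map_neg])
  have hsum := Submodule.finrank_add_eq_of_isCompl hcompl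
  rw [Module.finrank_fintype_fun_eq_card] at hsum
  refine ⟨_, _, hcompl, by omega, by omega, fun v hv hv0 => ?_, fun w hw hw0 => ?_⟩
  · rw [mem_ker_sub_one, toLin'_apply] at hv
    rw [hv]
    exact (Complex.pos_iff.mp (dotProduct_star_self_pos_iff.mpr hv0)).1
  · rw [mem_ker_add_one, toLin'_apply] at hw
    rw [hw, dotProduct_neg, Complex.neg_re, neg_lt_zero]
    exact (Complex.pos_iff.mp (dotProduct_star_self_pos_iff.mpr hw0)).1

end HermitianForm

section AnticommutingFamily

variable (K : Type*) {R ι : Type*} [CommRing K] [Ring R] [Algebra K R] {f : ι → R}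
  (hf : Pairwise fun i j => f i * f j = -(f j * f i))
include hf

lemma prod_map_mul_of_notMem {i : ι} : ∀ {l : List ι}, i ∉ l →
    (l.map f).prod * f i = ((-1 : K) ^ l.length) • (f i * (l.map f).prod)
  | [], _ => by simp
  | a :: t, h => by
    rw [List.mem_cons, not_or] at h
    simp only [List.map_cons, List.prod_cons, List.length_cons, mul_assoc,
      prod_map_mul_of_notMem h.2, mul_smul_comm]
    rw [← mul_assoc, hf (Ne.symm h.1), pow_succ, mul_smul]
    simp [mul_assoc]

lemma prod_map_mul_of_mem {i : ι} : ∀ {l : List ι}, l.Nodup → i ∈ l →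
    (l.map f).prod * f i = -((-1 : K) ^ l.length) • (f i * (l.map f).prod)
  | [], _, h => absurd h List.not_mem_nil
  | a :: t, hl, h => by
    rw [List.nodup_cons] at hl
    simp only [List.map_cons, List.prod_cons, List.length_cons, mul_assoc]
    rcases List.mem_cons.mp h with rfl | h
    · rw [prod_map_mul_of_notMem K hf hl.1, pow_succ]
      simp
    · rw [prod_map_mul_of_mem hl.2 h, mul_smul_comm, ← mul_assoc,
        hf (ne_of_mem_of_not_mem h hl.1).symm, pow_succ]
      simp [mul_assoc]

lemma prod_map_mul_self : ∀ {l : List ι}, l.Nodup → (∀ j ∈ l, f j * f j = 1) →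
    (l.map f).prod * (l.map f).prod = ((-1 : K) ^ l.length.choose 2) • 1
  | [], _, _ => by simp
  | a :: t, hl, h => by
    rw [List.nodup_cons] at hl
    simp only [List.map_cons, List.prod_cons, List.length_cons, Nat.choose_succ_succ',
      Nat.choose_one_right]
    calc f a * (t.map f).prod * (f a * (t.map f).prod)
        = f a * ((t.map f).prod * f a) * (t.map f).prod := by simp only [mul_assoc]
      _ = ((-1 : K) ^ (t.length + t.length.choose 2)) • 1 := by
        rw [prod_map_mul_of_notMem K hf hl.1, mul_smul_comm, smul_mul_assoc, ← mul_assoc,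
          h a List.mem_cons_self, one_mul, prod_map_mul_self hl.2
            fun j hj => h j (List.mem_cons_of_mem a hj), smul_smul, pow_add]

lemma star_prod_map [StarRing K] [StarRing R] [StarModule K R] :
    ∀ {l : List ι}, l.Nodup → (∀ j ∈ l, star (f j) = f j) →
    star (l.map f).prod = ((-1 : K) ^ l.length.choose 2) • (l.map f).prod
  | [], _, _ => by simp
  | a :: t, hl, h => by
    rw [List.nodup_cons] at hl
    simp only [List.map_cons, List.prod_cons, List.length_cons, Nat.choose_succ_succ',
      Nat.choose_one_right, star_mul, h a List.mem_cons_self]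
    rw [star_prod_map hl.2 fun j hj => h j (List.mem_cons_of_mem a hj), smul_mul_assoc,
      prod_map_mul_of_notMem K hf hl.1, smul_smul, pow_add, mul_comm]

end AnticommutingFamily

lemma matT_mul_self : matT * matT = 1 := by
  ext a b; fin_cases a <;> fin_cases b <;> simp [matT, mul_apply]

lemma matG1_mul_self : matG1 * matG1 = -1 := by
  ext a b; fin_cases a <;> fin_cases b <;> simp [matG1, mul_apply]

lemma matG2_mul_self : matG2 * matG2 = -1 := by
  ext a b; fin_cases a <;> fin_cases b <;> simp [matG2, mul_apply]

lemma matG1_mul_matG2 : matG1 * matG2 = -(matG2 * matG1) := by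
  ext a b; fin_cases a <;> fin_cases b <;> simp [matG1, matG2, mul_apply]

lemma matG1_mul_matT : matG1 * matT = -(matT * matG1) := by
  ext a b; fin_cases a <;> fin_cases b <;> simp [matG1, matT, mul_apply]

lemma matG2_mul_matT : matG2 * matT = -(matT * matG2) := by
  ext a b; fin_cases a <;> fin_cases b <;> simp [matG2, matT, mul_apply]

lemma conjTranspose_matT : matTᴴ = matT := by
  ext a b; fin_cases a <;> fin_cases b <;> simp [matT]

lemma conjTranspose_matG1 : matG1ᴴ = -matG1 := by
  ext a b; fin_cases a <;> fin_cases b <;> simp [matG1]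

lemma conjTranspose_matG2 : matG2ᴴ = -matG2 := by
  ext a b; fin_cases a <;> fin_cases b <;> simp [matG2]

/-- The Kronecker factors of `Phi ε i`. For the last index of odd `n`, `i / 2 = n / 2` exceeds
every slot, so this also covers `T ⊗ ⋯ ⊗ T`. -/
def slot (i ν : ℕ) : Matrix (Fin 2) (Fin 2) ℂ :=
  if ν < i / 2 then matT else if ν = i / 2 then (if i % 2 = 0 then matG1 else matG2) else matE

def slotSign (i ν : ℕ) : ℂ := if ν = i / 2 then -1 else 1

lemma slot_mul_slot_of_lt {i j : ℕ} (hij : i < j) (ν : ℕ) :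
    slot i ν * slot j ν = slotSign i ν • (slot j ν * slot i ν) := by
  unfold slot slotSign matE
  split_ifs <;> first | omega | simp [matG1_mul_matG2, matG1_mul_matT, matG2_mul_matT]

lemma slot_mul_self (i ν : ℕ) : slot i ν * slot i ν = slotSign i ν • 1 := by
  unfold slot slotSign matE
  split_ifs <;> first | omega | simp [matT_mul_self, matG1_mul_self, matG2_mul_self]

lemma conjTranspose_slot (i ν : ℕ) : (slot i ν)ᴴ = slotSign i ν • slot i ν := by
  unfold slot slotSign matE
  split_ifs <;> first | omega | simp [conjTranspose_matT, conjTranspose_matG1, conjTranspose_matG2]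

lemma prod_slotSign (i m : ℕ) : ∏ ν : Fin m, slotSign i ν = if i / 2 < m then -1 else 1 := by
  rw [Fin.prod_univ_eq_prod_range (slotSign i)]
  simp [slotSign, Finset.prod_ite_eq']

section tprod

variable {m : ℕ}

lemma tprod_mul (M N : Fin m → Matrix (Fin 2) (Fin 2) ℂ) :
    tprod M * tprod N = tprod (M * N) := by
  ext a b
  simp only [tprod, mul_apply, of_apply, Pi.mul_apply]
  rw [Fintype.prod_sum fun ν j => M ν (a ν) j * N ν j (b ν)]
  simp [Finset.prod_mul_distrib]

lemma tprod_smul (c : Fin m → ℂ) (M : Fin m → Matrix (Fin 2) (Fin 2) ℂ) :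
    tprod (c • M) = (∏ ν, c ν) • tprod M := by
  ext a b
  simp [tprod, Finset.prod_mul_distrib]

lemma tprod_one : tprod (1 : Fin m → Matrix (Fin 2) (Fin 2) ℂ) = 1 := by
  ext a b
  by_cases h : a = b
  · subst h
    simp [tprod]
  · obtain ⟨ν, hν⟩ := Function.ne_iff.mp h
    simpa [tprod, h] using Finset.prod_eq_zero (Finset.mem_univ ν) (by simp [hν])

lemma conjTranspose_tprod (M : Fin m → Matrix (Fin 2) (Fin 2) ℂ) :
    (tprod M)ᴴ = tprod fun ν => (M ν)ᴴ := by
  ext a b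
  simp [tprod, conjTranspose_apply]

lemma tprod_mul_tprod_comm {M N : Fin m → Matrix (Fin 2) (Fin 2) ℂ} {σ : Fin m → ℂ}
    (h : ∀ ν, M ν * N ν = σ ν • (N ν * M ν)) :
    tprod M * tprod N = (∏ ν, σ ν) • (tprod N * tprod M) := by
  rw [tprod_mul, tprod_mul, ← tprod_smul]
  exact congrArg tprod (funext h)

end tprod

lemma tau_mul_self {n : ℕ} {ε : Fin n → ℝ} (hε : ∀ i, ε i = 1 ∨ ε i = -1) (i : Fin n) :
    tau ε i * tau ε i = ε i := by
  rcases hε i with h | h <;> norm_num [tau, h]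

lemma star_tau {n : ℕ} {ε : Fin n → ℝ} (hε : ∀ i, ε i = 1 ∨ ε i = -1) (i : Fin n) :
    star (tau ε i) = ε i * tau ε i := by
  rcases hε i with h | h <;> norm_num [tau, h]

section Phi

variable {n : ℕ} (ε : Fin n → ℝ)

lemma Phi_eq_smul_tprod (i : Fin n) :
    Phi ε i = (tau ε i * if i.val / 2 < n / 2 then 1 else I) • tprod fun ν => slot i ν := by
  by_cases hi : i.val / 2 < n / 2
  · simp [Phi, hi, slot, show i.val < 2 * (n / 2) by omega]
  · have hslot : (fun ν : Fin (n / 2) => slot i ν) = fun _ => matT := by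
      funext ν
      simp [slot, show ν.val < i.val / 2 by omega]
    simp [Phi, hi, show ¬ i.val < 2 * (n / 2) by omega, hslot, smul_smul]

lemma Phi_mul_Phi_of_lt {i j : Fin n} (hij : i < j) :
    Phi ε i * Phi ε j = -(Phi ε j * Phi ε i) := by
  have hi : i.val / 2 < n / 2 := by omega
  have hslot := tprod_mul_tprod_comm fun ν : Fin (n / 2) => slot_mul_slot_of_lt hij ν
  simp only [Phi_eq_smul_tprod ε i, Phi_eq_smul_tprod ε j, smul_mul_smul_comm, hslot,
    prod_slotSign, if_pos hi, smul_smul]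
  rw [← neg_smul]
  congr 1
  ring

lemma pairwise_Phi_anticomm : Pairwise fun i j => Phi ε i * Phi ε j = -(Phi ε j * Phi ε i) := by
  intro i j hij
  rcases hij.lt_or_gt with h | h
  · exact Phi_mul_Phi_of_lt ε h
  · rw [Phi_mul_Phi_of_lt ε h, neg_neg]

variable {ε} (hε : ∀ i, ε i = 1 ∨ ε i = -1)
include hε

lemma Phi_mul_self (i : Fin n) : Phi ε i * Phi ε i = -(ε i : ℂ) • 1 := by
  have hslot : (fun ν : Fin (n / 2) => slot i ν) * (fun ν : Fin (n / 2) => slot i ν) =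
      (fun ν : Fin (n / 2) => slotSign i ν) • 1 := funext fun ν => slot_mul_self i ν
  rw [Phi_eq_smul_tprod, smul_mul_smul_comm, tprod_mul, hslot, tprod_smul, tprod_one,
    prod_slotSign, smul_smul]
  congr 1
  have := tau_mul_self hε i
  split_ifs
  · linear_combination -this
  · linear_combination -this + tau ε i ^ 2 * I_mul_I

lemma conjTranspose_Phi (i : Fin n) : (Phi ε i)ᴴ = -(ε i : ℂ) • Phi ε i := by
  have hslot : (fun ν : Fin (n / 2) => (slot i ν)ᴴ) =
      (fun ν : Fin (n / 2) => slotSign i ν) • fun ν : Fin (n / 2) => slot i ν :=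
    funext fun ν => conjTranspose_slot i ν
  rw [Phi_eq_smul_tprod, conjTranspose_smul, conjTranspose_tprod, hslot, tprod_smul,
    prod_slotSign, smul_smul, smul_smul, star_mul', star_tau hε]
  congr 1
  split_ifs <;> simp [mul_assoc]

lemma isUnit_Phi (i : Fin n) : IsUnit (Phi ε i) := by
  refine IsUnit.of_mul_eq_one (-(ε i : ℂ) • Phi ε i) ?_
  rw [mul_smul_comm, Phi_mul_self hε, smul_smul]
  rcases hε i with h | h <;> simp [h]

end Phi

section VolumeElement

variable {n : ℕ} (ε : Fin n → ℝ)

@[simp]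
lemma mem_negSet {i : Fin n} : i ∈ negSet ε ↔ ε i = -1 := by
  simp [negSet]

lemma cliffSet_mul_Phi_of_notMem {s : Finset (Fin n)} {i : Fin n} (hi : i ∉ s) :
    cliffSet ε s * Phi ε i = ((-1 : ℂ) ^ #s) • (Phi ε i * cliffSet ε s) := by
  rw [cliffSet, prod_map_mul_of_notMem ℂ (pairwise_Phi_anticomm ε) (by rwa [mem_sort]),
    length_sort]

lemma cliffSet_mul_Phi_of_mem {s : Finset (Fin n)} {i : Fin n} (hi : i ∈ s) :
    cliffSet ε s * Phi ε i = -((-1 : ℂ) ^ #s) • (Phi ε i * cliffSet ε s) := by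
  rw [cliffSet, prod_map_mul_of_mem ℂ (pairwise_Phi_anticomm ε) (sort_nodup _ _)
    (by rwa [mem_sort]), length_sort]

lemma exists_cliffSet_mul_Phi_eq_neg {s : Finset (Fin n)} (hs₀ : 0 < #s) (hs : #s < n) :
    ∃ i, cliffSet ε s * Phi ε i = -(Phi ε i * cliffSet ε s) := by
  rcases Nat.even_or_odd #s with he | ho
  · obtain ⟨i, hi⟩ := card_pos.mp hs₀
    exact ⟨i, by rw [cliffSet_mul_Phi_of_mem ε hi, he.neg_one_pow, neg_smul, one_smul]⟩
  · obtain ⟨i, -, hi⟩ := exists_mem_notMem_of_card_lt_card (s := s) (t := univ)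
      (by rwa [card_univ, Fintype.card_fin])
    exact ⟨i, by rw [cliffSet_mul_Phi_of_notMem ε hi, ho.neg_one_pow, neg_smul, one_smul]⟩

variable {ε} (hε : ∀ i, ε i = 1 ∨ ε i = -1)
include hε

lemma conjTranspose_cliffSet {s : Finset (Fin n)} (hs : ∀ i ∈ s, ε i = -1) :
    (cliffSet ε s)ᴴ = ((-1 : ℂ) ^ (#s).choose 2) • cliffSet ε s := by
  rw [← star_eq_conjTranspose, cliffSet, star_prod_map ℂ (pairwise_Phi_anticomm ε) (sort_nodup _ _),
    length_sort]
  intro i hi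
  rw [star_eq_conjTranspose, conjTranspose_Phi hε, hs i ((mem_sort _).mp hi)]
  simp

lemma cliffSet_mul_self {s : Finset (Fin n)} (hs : ∀ i ∈ s, ε i = -1) :
    cliffSet ε s * cliffSet ε s = ((-1 : ℂ) ^ (#s).choose 2) • 1 := by
  rw [cliffSet, prod_map_mul_self ℂ (pairwise_Phi_anticomm ε) (sort_nodup _ _), length_sort]
  intro i hi
  rw [Phi_mul_self hε, hs i ((mem_sort _).mp hi)]
  simp

end VolumeElement

section GramMatrix

variable {n : ℕ} {ε : Fin n → ℝ}

/-- The Gram matrix of `sform ε (I ^ k)`, `k = (#(negSet ε)).choose 2`: for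
`M = cliffSet ε (negSet ε)` one has `I ^ k • Mᴴ = (-I) ^ k • M` by `conjTranspose_cliffSet`. -/
noncomputable def gramMatrix (ε : Fin n → ℝ) :
    Matrix (Fin (n / 2) → Fin 2) (Fin (n / 2) → Fin 2) ℂ :=
  (-I) ^ (#(negSet ε)).choose 2 • cliffSet ε (negSet ε)

lemma exists_gramMatrix_mul_Phi (hp : 0 < #(negSet ε)) (hq : #(negSet ε) < n) :
    ∃ i, gramMatrix ε * Phi ε i = -(Phi ε i * gramMatrix ε) := by
  obtain ⟨i, hi⟩ := exists_cliffSet_mul_Phi_eq_neg ε hp hq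
  exact ⟨i, by rw [gramMatrix, smul_mul_assoc, hi, mul_smul_comm, smul_neg]⟩

variable (hε : ∀ i, ε i = 1 ∨ ε i = -1)
include hε

lemma conjTranspose_cliffSet_negSet :
    (cliffSet ε (negSet ε))ᴴ = ((-1 : ℂ) ^ (#(negSet ε)).choose 2) • cliffSet ε (negSet ε) :=
  conjTranspose_cliffSet hε fun _ => (mem_negSet ε).mp

lemma sform_eq_star_dotProduct_gramMatrix (u v : Spinor n) :
    sform ε (I ^ (#(negSet ε)).choose 2) u v = star u ⬝ᵥ gramMatrix ε *ᵥ v := by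
  have hstd : stdInner (cliffSet ε (negSet ε) *ᵥ u) v = star (cliffSet ε (negSet ε) *ᵥ u) ⬝ᵥ v :=
    rfl
  rw [sform, hstd, star_mulVec, ← dotProduct_mulVec, conjTranspose_cliffSet_negSet hε, gramMatrix,
    smul_mulVec, smul_mulVec, dotProduct_smul, dotProduct_smul, smul_eq_mul, smul_eq_mul,
    ← mul_assoc, ← mul_pow]
  simp

lemma conjTranspose_gramMatrix : (gramMatrix ε)ᴴ = gramMatrix ε := by
  rw [gramMatrix, conjTranspose_smul, conjTranspose_cliffSet_negSet hε, smul_smul, star_pow,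
    ← mul_pow]
  simp

lemma gramMatrix_mul_self : gramMatrix ε * gramMatrix ε = 1 := by
  rw [gramMatrix, smul_mul_smul_comm, cliffSet_mul_self hε fun _ => (mem_negSet ε).mp,
    smul_smul, ← mul_pow, ← mul_pow]
  simp

lemma conjTranspose_Phi_mul_gramMatrix_add (i : Fin n) :
    (Phi ε i)ᴴ * gramMatrix ε + (-1 : ℂ) ^ #(negSet ε) • (gramMatrix ε * Phi ε i) = 0 := by
  have hsq : (-1 : ℂ) ^ #(negSet ε) * (-1) ^ #(negSet ε) = 1 := by rw [← mul_pow]; simp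
  rw [gramMatrix, conjTranspose_Phi hε, mul_smul_comm, smul_mul_assoc, smul_mul_assoc]
  rcases hε i with hi | hi
  · rw [cliffSet_mul_Phi_of_notMem ε (by norm_num [hi]), hi]
    simp only [smul_smul, ← add_smul]
    exact smul_eq_zero_of_left (by push_cast; linear_combination (-I) ^ _ * hsq) _
  · rw [cliffSet_mul_Phi_of_mem ε ((mem_negSet ε).mpr hi), hi]
    simp only [smul_smul, ← add_smul]
    exact smul_eq_zero_of_left (by push_cast; linear_combination -(-I) ^ _ * hsq) _

lemma conjTranspose_cliffR_mul_gramMatrix_add (X : Fin n → ℝ) :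
    (cliffR ε X)ᴴ * gramMatrix ε + (-1 : ℂ) ^ #(negSet ε) • (gramMatrix ε * cliffR ε X) = 0 := by
  rw [cliffR, conjTranspose_sum, Finset.sum_mul, Finset.mul_sum, Finset.smul_sum,
    ← Finset.sum_add_distrib]
  refine Finset.sum_eq_zero fun i _ => ?_
  rw [conjTranspose_smul, Complex.star_def, conj_ofReal, smul_mul_assoc, mul_smul_comm, smul_comm,
    ← smul_add, conjTranspose_Phi_mul_gramMatrix_add hε, smul_zero]

end GramMatrix

theorem exists_invariant_hermitian_inner_product
    (n p : ℕ) (ε : Fin n → ℝ) (hε : ∀ i, ε i = 1 ∨ ε i = -1)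
    (hp : (negSet ε).card = p)
    (hp0 : 0 < p) (hq0 : p < n) :
    ∃ k : ℕ,
      -- with `d = i^k`, the form `⟨u,v⟩_Δ = d (e_{i₁}⋯e_{i_p}·u, v)` is Hermitian,
      (∀ u v : Spinor n,
        sform ε (Complex.I ^ k) v u = (starRingEnd ℂ) (sform ε (Complex.I ^ k) u v)) ∧
      -- it has neutral signature (`p > 0`, `q > 0`),
      (∃ V W : Submodule ℂ (Spinor n),
        IsCompl V W ∧
        Module.finrank ℂ V = 2 ^ (n / 2 - 1) ∧
        Module.finrank ℂ W = 2 ^ (n / 2 - 1) ∧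
        (∀ v ∈ V, v ≠ 0 → 0 < (sform ε (Complex.I ^ k) v v).re) ∧
        (∀ w ∈ W, w ≠ 0 → (sform ε (Complex.I ^ k) w w).re < 0)) ∧
      -- and it satisfies `⟨X·u, v⟩ + (-1)^p ⟨u, X·v⟩ = 0`.
      (∀ (X : Fin n → ℝ) (u v : Spinor n),
        sform ε (Complex.I ^ k) ((cliffR ε X).mulVec u) v
          + (-1 : ℂ) ^ p * sform ε (Complex.I ^ k) u ((cliffR ε X).mulVec v) = 0) := by
  subst hp
  refine ⟨(#(negSet ε)).choose 2, ?_⟩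
  simp only [sform_eq_star_dotProduct_gramMatrix hε]
  refine ⟨star_dotProduct_mulVec_swap (conjTranspose_gramMatrix hε), ?_, fun X u v => ?_⟩
  · obtain ⟨i, hi⟩ := exists_gramMatrix_mul_Phi hp0 hq0
    obtain ⟨V, W, hVW, hV, hW, hpos, hneg⟩ :=
      exists_neutral_isCompl_of_involution_anticomm (gramMatrix_mul_self hε) (isUnit_Phi hε i) hi
    have hcard : Fintype.card (Fin (n / 2) → Fin 2) = 2 * 2 ^ (n / 2 - 1) := by
      rw [Fintype.card_fun, Fintype.card_fin, Fintype.card_fin, ← pow_succ']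
      congr 1
      omega
    rw [hcard] at hV hW
    exact ⟨V, W, hVW, Nat.eq_of_mul_eq_mul_left two_pos hV, Nat.eq_of_mul_eq_mul_left two_pos hW,
      hpos, hneg⟩
  · rw [star_mulVec_dotProduct_add, conjTranspose_cliffR_mul_gramMatrix_add hε, zero_mulVec,
      dotProduct_zero]

end Paper
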